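/- For any nonempty well-quasi-order Q, the quasi-order T_f(Q) of finite leaf-labelled trees over Q ordered by tree homomorphisms satisfies o(T_f(Q)) = o(P_f(T_f(Q))) and w(T_f(Q)) = w(P_f(T_f(Q))), where P_f denotes the finite powerset with domination ordering. -/

import Mathlib

universe u v

open Ordinal

/-- A quasi-order: a reflexive transitive binary relation. -/
def IsQO {Q : Type u} (le : Q → Q → Prop) : Prop :=
  Reflexive le ∧ Transitive le

/-- A well-quasi-order: a quasi-order in which every infinite sequence of elements
contains a weakly increasing pair. -/
def IsWQO {Q : Type u} (le : Q → Q → Prop) : Prop :=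
  IsQO le ∧ ∀ f : ℕ → Q, ∃ i j : ℕ, i < j ∧ le (f i) (f j)

/-- The maximal order type of a (well-)quasi-order: the supremum of the order types of
all its linearizations.  A linearization of `le` having order type `o` is (up to
quotienting by equivalence) the same thing as a surjection `g : Q → o.toType` such that
`le a b → g a ≤ g b`; the linearization is then `fun a b => g a ≤ g b`. -/
noncomputable def maxOrderType {Q : Type u} (le : Q → Q → Prop) : Ordinal.{u} :=
  sSup { o : Ordinal.{u} |
    ∃ g : Q → o.ToType, Function.Surjective g ∧ ∀ a b : Q, le a b → g a ≤ g b }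

/-- Incomparability in a quasi-order. -/
def IncompRelQO {Q : Type u} (le : Q → Q → Prop) (x y : Q) : Prop :=
  ¬ le x y ∧ ¬ le y x

/-- One step in building finite antichain sequences: `a` extends `b` by one element
incomparable with every element of `b`. -/
def WidthStep {Q : Type u} (le : Q → Q → Prop) (a b : List Q) : Prop :=
  ∃ x : Q, (∀ y ∈ b, IncompRelQO le x y) ∧ a = b ++ [x]

open Classical in
/-- The width of a wqo, given by the recursion `w(Q) = sup_{x ∈ Q} (w(L_⊥(x)) + 1)`:
it is the rank of `[]` in the well-founded tree of finite antichain sequences, where the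
rank of an antichain sequence `l` is `sup (rank (l ++ [x]) + 1)` over all `x`
incomparable with every element of `l` (the elements incomparable with all of `l` being
exactly the current suborder `L_⊥`). -/
noncomputable def widthQO {Q : Type u} (le : Q → Q → Prop) : Ordinal.{u} :=
  if h : WellFounded (WidthStep le) then (h.apply ([] : List Q)).rank else 0

/-- Finite leaf-labelled trees over `Q`: leaves carry labels from `Q`, and an internal
node carries a finite nonempty list of children (encoded as a head child plus the list
of remaining children). -/
inductive LTree (Q : Type u) : Type u
  | leaf : Q → LTree Q
  | node : LTree Q → List (LTree Q) → LTree Q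

mutual
/-- The tree-homomorphism quasi-order `≤_T` on finite leaf-labelled trees:
`·x ≤_T ·y` iff `le x y`; `·x ≤_T ·(τ₀,…,τ_{l-1})` iff `·x ≤_T τ_j` for some `j < l`;
`·(σ₀,…,σ_{k-1}) ≤_T ·(τ₀,…,τ_{l-1})` iff for every `i < k` there is `j < l` with
`σᵢ ≤_T τ_j`; and `·(σ₀,…,σ_{k-1}) ≤_T ·y` never holds. -/
inductive TreeLE {Q : Type u} (le : Q → Q → Prop) : LTree Q → LTree Q → Prop
  | leaf {x y : Q} : le x y → TreeLE le (.leaf x) (.leaf y)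
  | leafNode {x : Q} {t : LTree Q} {ts : List (LTree Q)} :
      TreeMemLE le (.leaf x) (t :: ts) → TreeLE le (.leaf x) (.node t ts)
  | node {s t : LTree Q} {ss ts : List (LTree Q)} :
      TreeAllLE le (s :: ss) (t :: ts) → TreeLE le (.node s ss) (.node t ts)

/-- `TreeMemLE le a l` means `∃ b ∈ l, TreeLE le a b`. -/
inductive TreeMemLE {Q : Type u} (le : Q → Q → Prop) : LTree Q → List (LTree Q) → Prop
  | head {a b : LTree Q} {l : List (LTree Q)} : TreeLE le a b → TreeMemLE le a (b :: l)
  | tail {a b : LTree Q} {l : List (LTree Q)} : TreeMemLE le a l → TreeMemLE le a (b :: l)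

/-- `TreeAllLE le l₁ l₂` means `∀ a ∈ l₁, ∃ b ∈ l₂, TreeLE le a b`. -/
inductive TreeAllLE {Q : Type u} (le : Q → Q → Prop) : List (LTree Q) → List (LTree Q) → Prop
  | nil {l : List (LTree Q)} : TreeAllLE le [] l
  | cons {a : LTree Q} {l₁ l₂ : List (LTree Q)} :
      TreeMemLE le a l₂ → TreeAllLE le l₁ l₂ → TreeAllLE le (a :: l₁) l₂
end

/-!
Sending a leaf to `∅` and a node to the set of its children is a monotone surjection
`T_f(Q) → P_f(T_f(Q))`, so every linearization of `P_f(T_f(Q))` pulls back to one of `T_f(Q)`,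
and any section of it maps incomparable finite sets to incomparable trees.  Conversely a
linearization `g` of `T_f(Q)` extends to `P_f(T_f(Q))` by `s ↦ max g(s)`, and `x ↦ {x}`
preserves incomparability.  So both sides have the same linearization types, and antichain
sequences transfer in both directions, which bounds each width by the other.
-/

section Linearization

variable {α β : Type u}

/-- `maxOrderType r` is `sSup (linearizationTypes r)` by definition. -/
def linearizationTypes (r : α → α → Prop) : Set Ordinal.{u} :=
  {o | ∃ g : α → o.ToType, Function.Surjective g ∧ ∀ a b, r a b → g a ≤ g b}

theorem linearizationTypes_subset_of_surjective {r : α → α → Prop} {s : β → β → Prop}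
    {f : α → β} (hf : Function.Surjective f) (hmono : ∀ a b, r a b → s (f a) (f b)) :
    linearizationTypes s ⊆ linearizationTypes r := by
  rintro o ⟨g, hg, hgmono⟩
  exact ⟨g ∘ f, hg.comp hf, fun a b hab => hgmono _ _ (hmono a b hab)⟩

end Linearization

section FinsetDom

variable {α : Type u}

def FinsetDom (r : α → α → Prop) (s t : Finset α) : Prop :=
  ∀ x ∈ s, ∃ y ∈ t, r x y

theorem linearizationTypes_subset_finsetDom [Nonempty α] (r : α → α → Prop) :
    linearizationTypes r ⊆ linearizationTypes (FinsetDom r) := by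
  rintro o ⟨g, hg, hmono⟩
  have : Nonempty o.ToType := ⟨g (Classical.arbitrary α)⟩
  let := WellFoundedLT.toOrderBot o.ToType
  refine ⟨fun s => s.sup g, fun x => ?_, fun s t hst => Finset.sup_le fun x hx => ?_⟩
  · obtain ⟨a, rfl⟩ := hg x
    exact ⟨{a}, Finset.sup_singleton⟩
  · obtain ⟨y, hy, hxy⟩ := hst x hx
    exact (hmono x y hxy).trans (Finset.le_sup hy)

theorem IncompRelQO.finsetDom_singleton {r : α → α → Prop} {x y : α}
    (h : IncompRelQO r x y) : IncompRelQO (FinsetDom r) {x} {y} := by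
  simpa [IncompRelQO, FinsetDom] using h

end FinsetDom

theorem IncompRelQO.of_rightInverse {α β : Type u} {r : α → α → Prop} {s : β → β → Prop}
    {f : α → β} {g : β → α} (hfg : Function.RightInverse g f)
    (hmono : ∀ a b, r a b → s (f a) (f b)) {x y : β} (h : IncompRelQO s x y) :
    IncompRelQO r (g x) (g y) :=
  ⟨fun hxy => h.1 (hfg x ▸ hfg y ▸ hmono _ _ hxy),
    fun hyx => h.2 (hfg x ▸ hfg y ▸ hmono _ _ hyx)⟩

theorem Acc.rank_le_rank_of_map {α β : Type u} {r : α → α → Prop} {s : β → β → Prop}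
    (f : α → β) (hf : ∀ a b, r a b → s (f a) (f b)) {a : α} (ha : Acc r a)
    (hb : Acc s (f a)) : ha.rank ≤ hb.rank := by
  induction ha with
  | intro a _ ih =>
    rw [Acc.rank_eq]
    refine Ordinal.iSup_le fun ⟨c, hca⟩ => ?_
    exact (Order.succ_le_succ (ih c hca (hb.inv (hf c a hca)))).trans
      (Order.succ_le_of_lt (hb.rank_lt_of_rel (hf c a hca)))

section Width

variable {α β : Type u} {r : α → α → Prop} {s : β → β → Prop} {f : α → β}
  (hf : ∀ x y, IncompRelQO r x y → IncompRelQO s (f x) (f y))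
include hf

theorem WidthStep.map {a b : List α} (h : WidthStep r a b) :
    WidthStep s (a.map f) (b.map f) := by
  obtain ⟨x, hx, rfl⟩ := h
  refine ⟨f x, fun y hy => ?_, List.map_append ..⟩
  obtain ⟨z, hz, rfl⟩ := List.mem_map.mp hy
  exact hf x z (hx z hz)

theorem WellFounded.widthStep_of_incomp (h : WellFounded (WidthStep s)) :
    WellFounded (WidthStep r) :=
  Subrelation.wf (fun hab => WidthStep.map hf hab) (InvImage.wf (List.map f) h)

theorem widthQO_le_of_incomp (h : WellFounded (WidthStep s)) : widthQO r ≤ widthQO s := by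
  rw [widthQO, widthQO, dif_pos h, dif_pos (h.widthStep_of_incomp hf)]
  exact Acc.rank_le_rank_of_map (List.map f) (fun _ _ => WidthStep.map hf) _ _

theorem widthQO_eq_of_incomp {g : β → α}
    (hg : ∀ x y, IncompRelQO s x y → IncompRelQO r (g x) (g y)) : widthQO r = widthQO s := by
  by_cases h : WellFounded (WidthStep s)
  · exact le_antisymm (widthQO_le_of_incomp hf h)
      (widthQO_le_of_incomp hg (h.widthStep_of_incomp hf))
  · have h' : ¬ WellFounded (WidthStep r) := fun h' => h (h'.widthStep_of_incomp hg)
    rw [widthQO, widthQO, dif_neg h, dif_neg h']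

end Width

namespace LTree

variable {Q : Type u} (le : Q → Q → Prop)

instance [Nonempty Q] : Nonempty (LTree Q) :=
  ⟨.leaf (Classical.arbitrary Q)⟩

theorem treeMemLE_iff {a : LTree Q} {l : List (LTree Q)} :
    TreeMemLE le a l ↔ ∃ b ∈ l, TreeLE le a b := by
  induction l with
  | nil => exact ⟨fun h => (by cases h), fun ⟨_, hb, _⟩ => (by cases hb)⟩
  | cons c l ih =>
    rw [List.exists_mem_cons_iff, ← ih]
    exact ⟨fun h => by cases h <;> tauto, fun h => h.elim .head .tail⟩

theorem treeAllLE_iff {l₁ l₂ : List (LTree Q)} :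
    TreeAllLE le l₁ l₂ ↔ ∀ a ∈ l₁, ∃ b ∈ l₂, TreeLE le a b := by
  induction l₁ with
  | nil => exact ⟨fun _ => by simp, fun _ => .nil⟩
  | cons c l ih =>
    rw [List.forall_mem_cons, ← ih, ← treeMemLE_iff]
    exact ⟨fun h => by cases h; tauto, fun h => .cons h.1 h.2⟩

open Classical in
noncomputable def children : LTree Q → Finset (LTree Q)
  | leaf _ => ∅
  | node t ts => (t :: ts).toFinset

theorem finsetDom_children {a b : LTree Q} (h : TreeLE le a b) :
    FinsetDom (TreeLE le) a.children b.children := by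
  cases h with
  | leaf | leafNode => simp [FinsetDom, children]
  | node h => simpa [FinsetDom, children] using (treeAllLE_iff le).mp h

theorem children_surjective [Nonempty Q] : Function.Surjective (children : LTree Q → _) := by
  intro s
  cases hs : s.toList with
  | nil => exact ⟨.leaf (Classical.arbitrary Q), by simp_all [children]⟩
  | cons t ts =>
    classical
    exact ⟨.node t ts, by rw [children, ← hs, Finset.toList_toFinset]⟩

end LTree

/-- For any nonempty wqo `Q`, the quasi-order `T_f(Q)` satisfies
`o(T_f(Q)) = o(P_f(T_f(Q)))` and `w(T_f(Q)) = w(P_f(T_f(Q)))`, where `P_f` is the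
finite powerset (finite subsets with the domination ordering
`s ≤ t ↔ ∀ x ∈ s, ∃ y ∈ t, x ≤ y`). -/
theorem maxOrderType_width_treeLE_finsetDomination {Q : Type u} [Nonempty Q]
    (le : Q → Q → Prop) (hwqo : IsWQO le) :
    maxOrderType (TreeLE le) =
      maxOrderType (fun s t : Finset (LTree Q) => ∀ x ∈ s, ∃ y ∈ t, TreeLE le x y) ∧
    widthQO (TreeLE le) =
      widthQO (fun s t : Finset (LTree Q) => ∀ x ∈ s, ∃ y ∈ t, TreeLE le x y) := by
  have hmono : ∀ a b, TreeLE le a b → FinsetDom (TreeLE le) a.children b.children :=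
    fun _ _ => LTree.finsetDom_children le
  have hsurj := LTree.children_surjective (Q := Q)
  constructor
  · exact congrArg sSup (Set.Subset.antisymm (linearizationTypes_subset_finsetDom _)
      (linearizationTypes_subset_of_surjective hsurj hmono))
  · exact widthQO_eq_of_incomp (fun _ _ => IncompRelQO.finsetDom_singleton)
      (fun _ _ => IncompRelQO.of_rightInverse (Function.rightInverse_surjInv hsurj) hmono)
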